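/- arXiv:1002.2440 — 2 statements merged into one kernel-verified Lean document; each statement's English description precedes it below -/
import Mathlib

section
/- For any list update algorithm A, the total cost of A on a request sequence σ equals the sum over all unordered pairs {x,y} of list items of the projected pairwise cost A_{xy}(σ). -/
abbrev Before {I : Type} [DecidableEq I] (x y : I) (L : List I) : Prop :=
  L.idxOf x < L.idxOf y

/-- Kendall tau distance: minimal number of adjacent transpositions between the
permutations `L` and `M`, i.e. the number of pairs whose relative order differs. -/
def numInv {I : Type} [DecidableEq I] (L M : List I) : ℕ :=
  ((L.product L).filter
    (fun p => decide (L.idxOf p.1 < L.idxOf p.2 ∧ M.idxOf p.2 < M.idxOf p.1))).length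

/-- Total cost in the partial cost model: paid exchanges plus access position. -/
def totalCostAux {I : Type} [DecidableEq I] (S : List I → List I) :
    List I → List I → ℕ
  | _, [] => 0
  | pref, z :: rest =>
      numInv (S pref) (S (pref ++ [z])) + (S (pref ++ [z])).idxOf z
        + totalCostAux S (pref ++ [z]) rest

def totalCost {I : Type} [DecidableEq I] (S : List I → List I) (σ : List I) : ℕ :=
  totalCostAux S [] σ

/-- Projected pairwise cost `A_{xy}(σ)`. -/
def pairCostAux {I : Type} [DecidableEq I] (S : List I → List I) (x y : I) :
    List I → List I → ℕ
  | _, [] => 0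
  | pref, z :: rest =>
      (if (Before x y (S pref) ∧ Before y x (S (pref ++ [z]))) ∨
          (Before y x (S pref) ∧ Before x y (S (pref ++ [z]))) then 1 else 0)
      + (if (z = x ∧ Before y x (S (pref ++ [z]))) ∨
           (z = y ∧ Before x y (S (pref ++ [z]))) then 1 else 0)
      + pairCostAux S x y (pref ++ [z]) rest

def pairCost {I : Type} [DecidableEq I] (S : List I → List I) (x y : I) (σ : List I) : ℕ :=
  pairCostAux S x y [] σ

/-! The Kendall tau distance between consecutive lists counts the pairs whose relative order
changes, and the access position of `z` counts the items in front of `z`. Both are sums over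
ordered pairs of indicators that vanish on the diagonal, hence sums over unordered pairs `x < y`
of the two per-pair contributions that make up `A_{xy}`; summing over the requests gives the
theorem. -/

open Finset

theorem ite_or_eq_ite_add_ite {M : Type*} [AddZeroClass M] {p q : Prop} [Decidable p]
    [Decidable q] (a : M) (h : ¬(p ∧ q)) :
    (if p ∨ q then a else 0) = (if p then a else 0) + if q then a else 0 := by
  by_cases hp : p <;> by_cases hq : q <;> simp_all

theorem sum_sum_eq_sum_sum_lt_add_swap {I M : Type*} [Fintype I] [LinearOrder I]
    [AddCommMonoid M] (g : I → I → M) (hg : ∀ x, g x x = 0) :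
    ∑ x, ∑ y, g x y = ∑ x, ∑ y, if x < y then g x y + g y x else 0 := by
  have hsplit : ∀ x y, g x y = (if x < y then g x y else 0) + if y < x then g x y else 0 := by
    intro x y
    rcases lt_trichotomy x y with h | rfl | h
    · simp [h, h.not_gt]
    · simp [hg]
    · simp [h, h.not_gt]
  calc ∑ x, ∑ y, g x y
      = (∑ x, ∑ y, if x < y then g x y else 0) + ∑ x, ∑ y, if y < x then g x y else 0 := by
        simp only [← sum_add_distrib, ← hsplit]
    _ = (∑ x, ∑ y, if x < y then g x y else 0) + ∑ x, ∑ y, if x < y then g y x else 0 := by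
        rw [sum_comm (f := fun x y => if y < x then g x y else 0)]
    _ = ∑ x, ∑ y, if x < y then g x y + g y x else 0 := by
        simp only [← sum_add_distrib, ← ite_add_zero]

namespace List.Nodup

variable {α : Type*} [DecidableEq α] [Fintype α] {l : List α}

theorem length_filter_eq_card (hl : l.Nodup) (hall : ∀ a, a ∈ l) (p : α → Bool) :
    (l.filter p).length = #{a | p a} := by
  rw [← toFinset_card_of_nodup (hl.filter p), toFinset_filter]
  congr 1
  ext a
  simp [hall a]

theorem idxOf_eq_card_idxOf_lt (hl : l.Nodup) (hall : ∀ a, a ∈ l) (z : α) :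
    l.idxOf z = #{w | l.idxOf w < l.idxOf z} := by
  have hprefix : ({w | l.idxOf w < l.idxOf z} : Finset α) = (l.take (l.idxOf z)).toFinset := by
    ext w
    simp [mem_take_iff_idxOf_lt (hall w)]
  rw [hprefix, toFinset_card_of_nodup (hl.sublist (take_sublist _ _)), length_take,
    Nat.min_eq_left (idxOf_lt_length_of_mem (hall z)).le]

end List.Nodup

section PairDecomposition

variable {I : Type} [DecidableEq I]

-- The two summands of `A_{xy}` at a single request.
def pairExchangeCost (L M : List I) (x y : I) : ℕ :=
  if (Before x y L ∧ Before y x M) ∨ (Before y x L ∧ Before x y M) then 1 else 0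

def pairAccessCost (M : List I) (z x y : I) : ℕ :=
  if (z = x ∧ Before y x M) ∨ (z = y ∧ Before x y M) then 1 else 0

theorem pairCostAux_cons (S : List I → List I) (x y z : I) (pref rest : List I) :
    pairCostAux S x y pref (z :: rest) =
      pairExchangeCost (S pref) (S (pref ++ [z])) x y + pairAccessCost (S (pref ++ [z])) z x y
        + pairCostAux S x y (pref ++ [z]) rest :=
  rfl

variable [Fintype I] [LinearOrder I]

theorem numInv_eq_sum_pairExchangeCost {L : List I} (hL : L.Nodup) (hLall : ∀ x, x ∈ L)
    (M : List I) :
    numInv L M = ∑ x, ∑ y, if x < y then pairExchangeCost L M x y else 0 := by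
  have hprod : ∀ a : I × I, a ∈ L.product L := fun a =>
    List.mem_product.mpr ⟨hLall a.1, hLall a.2⟩
  calc numInv L M = ∑ x, ∑ y, if Before x y L ∧ Before y x M then 1 else 0 := by
        rw [numInv, List.Nodup.length_filter_eq_card (l := L.product L) (hL.product hL) hprod,
          card_filter, ← Fintype.sum_prod_type']
        simp
    _ = ∑ x, ∑ y, if x < y then pairExchangeCost L M x y else 0 := by
        rw [sum_sum_eq_sum_sum_lt_add_swap _ fun x => by simp]
        refine sum_congr rfl fun x _ => sum_congr rfl fun y _ => ?_
        rw [pairExchangeCost, ite_or_eq_ite_add_ite]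
        exact fun ⟨⟨hxy, _⟩, hyx, _⟩ => lt_asymm hxy hyx

theorem idxOf_eq_sum_pairAccessCost {M : List I} (hM : M.Nodup) (hMall : ∀ x, x ∈ M) (z : I) :
    M.idxOf z = ∑ x, ∑ y, if x < y then pairAccessCost M z x y else 0 := by
  calc M.idxOf z = ∑ x, if Before x z M then 1 else 0 :=
        (hM.idxOf_eq_card_idxOf_lt hMall z).trans (card_filter _ _)
    _ = ∑ x, ∑ y, if z = y ∧ Before x y M then 1 else 0 := by
        simp [ite_and]
    _ = ∑ x, ∑ y, if x < y then pairAccessCost M z x y else 0 := by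
        rw [sum_sum_eq_sum_sum_lt_add_swap _ fun x => by simp]
        refine sum_congr rfl fun x _ => sum_congr rfl fun y _ => ?_
        rw [pairAccessCost, ite_or_eq_ite_add_ite, add_comm]
        exact fun ⟨⟨_, hyx⟩, _, hxy⟩ => lt_asymm hxy hyx

theorem totalCostAux_eq_sum_pairCostAux (S : List I → List I) (hS : ∀ τ, (S τ).Nodup)
    (hSall : ∀ τ x, x ∈ S τ) (σ pref : List I) :
    totalCostAux S pref σ = ∑ x, ∑ y, if x < y then pairCostAux S x y pref σ else 0 := by
  induction σ generalizing pref with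
  | nil => simp [totalCostAux, pairCostAux]
  | cons z rest ih =>
    rw [totalCostAux, ih, numInv_eq_sum_pairExchangeCost (hS _) (hSall _),
      idxOf_eq_sum_pairAccessCost (hS _) (hSall _)]
    simp only [← sum_add_distrib, pairCostAux_cons, ← ite_add_zero]

end PairDecomposition

/-- The total cost of any list update algorithm on `σ` equals the sum
over all unordered pairs `{x,y}` of items of the projected pairwise cost `A_{xy}(σ)`. -/
theorem totalCost_eq_sum_pairCost
    {I : Type} [DecidableEq I] [Fintype I] [LinearOrder I]
    (S : List I → List I) (L0 : List I)
    (hnodup : L0.Nodup) (huniv : ∀ x : I, x ∈ L0)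
    (hperm : ∀ σ, (S σ).Perm L0) (σ : List I) :
    totalCost S σ = ∑ x : I, ∑ y : I, if x < y then pairCost S x y σ else 0 :=
  totalCostAux_eq_sum_pairCostAux S (fun τ => (hperm τ).nodup_iff.mpr hnodup)
    (fun τ x => (hperm τ).mem_iff.mpr (huniv x)) σ []
end

section
/- For a deterministic projective algorithm, if the pair of unary projections x^i, y^j is agile and the pair x^i, z^k is agile (with y ≠ z), then there is exactly one index q with 1 ≤ q ≤ i such that the q-th request to x participates in an agile pair, i.e., |R(x^i)| = 1. -/
def proj2 {I : Type} [DecidableEq I] (x y : I) (σ : List I) : List I :=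
  σ.filter (fun z => decide (z = x ∨ z = y))

def Projective {I : Type} [DecidableEq I] (S : List I → List I) : Prop :=
  ∀ (x y : I) (σ : List I), Before x y (S σ) ↔ Before x y (S (proj2 x y σ))

/-- The sequence `σ` with the requests at positions `p` and `p+1` transposed. -/
def SwapAt {I : Type} (σ : List I) (p : ℕ) : List I :=
  σ.take p ++ ((σ.drop p).take 2).reverse ++ σ.drop (p + 2)

/-- The requests at positions `p`, `p+1` of `σ` are an agile pair of requests to `x`
and `y`: they are adjacent requests to `x` and `y` (in either order) and transposing
them changes the relative order of `x` and `y` in the resulting list state. -/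
def AgilePairAt {I : Type} [DecidableEq I] (S : List I → List I)
    (σ : List I) (p : ℕ) (x y : I) : Prop :=
  ((σ[p]? = some x ∧ σ[p + 1]? = some y) ∨
   (σ[p]? = some y ∧ σ[p + 1]? = some x)) ∧
  ¬ (Before x y (S σ) ↔ Before x y (S (SwapAt σ p)))

/-- `x` and `y` are adjacent in the list state `L`. -/
def AdjacentIn {I : Type} (x y : I) (L : List I) : Prop :=
  ∃ k, (L[k]? = some x ∧ L[k + 1]? = some y) ∨
       (L[k]? = some y ∧ L[k + 1]? = some x)

/-- `τ ∈ perm(x^i y^j)`: exactly `i` requests to `x`, `j` requests to `y`, nothing else. -/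
def InPerm {I : Type} [DecidableEq I] (x y : I) (i j : ℕ) (τ : List I) : Prop :=
  τ.count x = i ∧ τ.count y = j ∧ ∀ z ∈ τ, z = x ∨ z = y

/-- The pair of unary projections `x^i`, `y^j` is agile: both relative orders of `x`
and `y` are realized by sequences in `perm(x^i y^j)`. -/
def Agile {I : Type} [DecidableEq I] (S : List I → List I) (x : I) (i : ℕ)
    (y : I) (j : ℕ) : Prop :=
  ∃ τ τ' : List I, InPerm x y i j τ ∧ InPerm x y i j τ' ∧
    Before x y (S τ) ∧ Before y x (S τ')

/-- `x_(q) ∈ R(x^i)`: in some request sequence `σ` with `i` requests to `x`, the `q`-th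
request to `x` forms an agile pair with some request to another item `y`. -/
def InR {I : Type} [DecidableEq I] (S : List I → List I) (x : I) (i q : ℕ) : Prop :=
  ∃ (σ : List I) (y : I) (p : ℕ), σ.count x = i ∧ y ≠ x ∧ AgilePairAt S σ p x y ∧
    ((σ[p]? = some x ∧ (σ.take (p + 1)).count x = q) ∨
     (σ[p + 1]? = some x ∧ (σ.take (p + 2)).count x = q))

open List

section

variable {I : Type}

theorem List.exists_eq_append_cons_of_lt_count {α : Type*} [DecidableEq α] {a : α} :
    ∀ {l : List α} {n : ℕ}, n < l.count a →
      ∃ l₁ l₂, l = l₁ ++ a :: l₂ ∧ l₁.count a = n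
  | [], _, h => by simp at h
  | b :: l, n, h => by
    by_cases hb : b = a
    · subst hb
      cases n with
      | zero => exact ⟨[], l, rfl, rfl⟩
      | succ n =>
        obtain ⟨l₁, l₂, rfl, hn⟩ := exists_eq_append_cons_of_lt_count (l := l) (n := n)
          (by simpa using h)
        exact ⟨b :: l₁, l₂, rfl, by simp [hn]⟩
    · obtain ⟨l₁, l₂, rfl, hn⟩ := exists_eq_append_cons_of_lt_count (l := l) (n := n)
        (by simpa [count_cons, hb] using h)
      exact ⟨b :: l₁, l₂, rfl, by simp [hb, hn]⟩

theorem List.exists_eq_append_cons_cons {α : Type*} {l : List α} {p : ℕ} {c d : α}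
    (hc : l[p]? = some c) (hd : l[p + 1]? = some d) :
    ∃ A B, l = A ++ c :: d :: B ∧ A.length = p := by
  obtain ⟨hp, rfl⟩ := List.getElem?_eq_some_iff.1 hc
  obtain ⟨hp', rfl⟩ := List.getElem?_eq_some_iff.1 hd
  refine ⟨l.take p, l.drop (p + 2), ?_, by simp; omega⟩
  conv_lhs => rw [← take_append_drop p l, drop_eq_getElem_cons hp, drop_eq_getElem_cons hp']

theorem List.Perm.exists_swap_not_iff {α : Type*} {l l' : List α} (h : l.Perm l')
    (f : List α → Prop) (hf : ¬ (f l ↔ f l')) :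
    ∃ A c d B, (A ++ c :: d :: B).Perm l ∧
      ¬ (f (A ++ c :: d :: B) ↔ f (A ++ d :: c :: B)) := by
  induction h generalizing f with
  | nil => exact absurd Iff.rfl hf
  | cons a _ ih =>
    obtain ⟨A, c, d, B, hp, hAB⟩ := ih (fun t => f (a :: t)) hf
    exact ⟨a :: A, c, d, B, hp.cons a, hAB⟩
  | swap c d l => exact ⟨[], d, c, l, Perm.refl _, hf⟩
  | @trans l₁ l₂ l₃ h₁₂ _ ih₁ ih₂ =>
    by_cases hf₁₂ : f l₁ ↔ f l₂
    · obtain ⟨A, c, d, B, hp, hAB⟩ := ih₂ f fun hf₂₃ => hf (hf₁₂.trans hf₂₃)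
      exact ⟨A, c, d, B, hp.trans h₁₂.symm, hAB⟩
    · exact ih₁ f hf₁₂

theorem swapAt_append_cons_cons (A B : List I) (c d : I) :
    SwapAt (A ++ c :: d :: B) A.length = A ++ d :: c :: B := by
  simp [SwapAt]

theorem adjacentIn_comm {a b : I} {L : List I} : AdjacentIn a b L ↔ AdjacentIn b a L := by
  simp only [AdjacentIn, or_comm]

variable [DecidableEq I]

theorem proj2_append (x y : I) (l l' : List I) :
    proj2 x y (l ++ l') = proj2 x y l ++ proj2 x y l' :=
  filter_append ..

theorem proj2_cons (x y a : I) (l : List I) :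
    proj2 x y (a :: l) = if a = x ∨ a = y then a :: proj2 x y l else proj2 x y l := by
  by_cases h : a = x ∨ a = y <;> simp [proj2, h]

theorem proj2_proj2 (x y : I) (l : List I) : proj2 x y (proj2 x y l) = proj2 x y l := by
  simp [proj2, filter_filter]

theorem proj2_proj2_eq_nil {x u v : I} {l : List I} (hx : x ∉ l) (huv : u ≠ v) :
    proj2 x u (proj2 x v l) = [] := by
  simp only [proj2, filter_filter, filter_eq_nil_iff]
  intro a ha
  have hax : a ≠ x := fun h => hx (h ▸ ha)
  grind

theorem proj2_append_cons_cons_comm {a b c d e : I} (A B : List I) (he : e = c ∨ e = d)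
    (hea : e ≠ a) (heb : e ≠ b) :
    proj2 a b (A ++ c :: d :: B) = proj2 a b (A ++ d :: c :: B) := by
  rcases he with rfl | rfl <;> simp [proj2_append, proj2_cons, hea, heb]

theorem exists_proj2_eq_proj2 {x u v : I} (hu : u ≠ x) (huv : u ≠ v) :
    ∀ {s t : List I}, s.count x = t.count x →
      ∃ ρ, proj2 x u ρ = proj2 x u s ∧ proj2 x v ρ = proj2 x v t
  | [], t, h => ⟨proj2 x v t, proj2_proj2_eq_nil (count_eq_zero.1 h.symm) huv, proj2_proj2 ..⟩
  | a :: s, t, h => by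
    by_cases ha : a = x
    · subst ha
      obtain ⟨t₁, t₂, rfl, ht₁⟩ :=
        exists_eq_append_cons_of_lt_count (n := 0) (by rw [← h]; simp)
      obtain ⟨ρ, hρu, hρv⟩ := exists_proj2_eq_proj2 hu huv (s := s) (t := t₂)
        (by simpa [ht₁] using h)
      refine ⟨proj2 a v t₁ ++ a :: ρ, ?_, ?_⟩
      · simp [proj2_append, proj2_cons, hρu, proj2_proj2_eq_nil (count_eq_zero.1 ht₁) huv]
      · simp [proj2_append, proj2_cons, hρv, proj2_proj2]
    · obtain ⟨ρ, hρu, hρv⟩ := exists_proj2_eq_proj2 hu huv (s := s) (t := t)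
        (by simpa [count_cons, ha] using h)
      refine ⟨proj2 x u [a] ++ ρ, ?_, ?_⟩
      · rw [proj2_append, proj2_proj2, hρu, ← proj2_append]; rfl
      · rw [proj2_append, proj2_proj2_eq_nil (by simpa [eq_comm] using ha) huv.symm, hρv]; rfl

theorem mem_of_before {a b : I} {L : List I} (h : Before a b L) : a ∈ L :=
  idxOf_lt_length_iff.1 (h.trans_le idxOf_le_length)

theorem mem_of_not_before {a b : I} {L : List I} (ha : a ∈ L) (h : ¬ Before a b L) :
    b ∈ L := by
  by_contra hb
  exact h (by rw [Before, idxOf_eq_length_iff.2 hb]; exact idxOf_lt_length_iff.2 ha)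

theorem idxOf_eq_of_getElem?_eq {a : I} {L : List I} {k : ℕ} (hL : L.Nodup)
    (h : L[k]? = some a) : L.idxOf a = k := by
  obtain ⟨hk, rfl⟩ := List.getElem?_eq_some_iff.1 h
  exact hL.idxOf_getElem k hk

theorem adjacentIn_iff {a b : I} {L : List I} (hL : L.Nodup) :
    AdjacentIn a b L ↔ a ∈ L ∧ b ∈ L ∧
      (L.idxOf b = L.idxOf a + 1 ∨ L.idxOf a = L.idxOf b + 1) := by
  constructor
  · rintro ⟨k, ⟨ha, hb⟩ | ⟨hb, ha⟩⟩
    · refine ⟨mem_of_getElem? ha, mem_of_getElem? hb, Or.inl ?_⟩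
      rw [idxOf_eq_of_getElem?_eq hL ha, idxOf_eq_of_getElem?_eq hL hb]
    · refine ⟨mem_of_getElem? ha, mem_of_getElem? hb, Or.inr ?_⟩
      rw [idxOf_eq_of_getElem?_eq hL ha, idxOf_eq_of_getElem?_eq hL hb]
  · rintro ⟨ha, hb, h | h⟩
    · exact ⟨L.idxOf a, Or.inl ⟨getElem?_idxOf ha, h ▸ getElem?_idxOf hb⟩⟩
    · exact ⟨L.idxOf b, Or.inr ⟨getElem?_idxOf hb, h ▸ getElem?_idxOf ha⟩⟩

theorem exists_between_of_not_adjacentIn {a b : I} {L : List I} (hL : L.Nodup)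
    (ha : a ∈ L) (hb : b ∈ L) (hab : a ≠ b) (h : ¬ AdjacentIn a b L) :
    ∃ w, w ≠ a ∧ w ≠ b ∧
      (Before a w L ∧ Before w b L ∨ Before b w L ∧ Before w a L) := by
  wlog hlt : L.idxOf a < L.idxOf b generalizing a b
  · have hlt' : L.idxOf b < L.idxOf a :=
      lt_of_le_of_ne (not_lt.1 hlt) fun e => hab ((idxOf_inj hb).1 e).symm
    obtain ⟨w, hwb, hwa, hw⟩ := this hb ha hab.symm (adjacentIn_comm.not.1 h) hlt'
    exact ⟨w, hwa, hwb, hw.symm⟩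
  have hgap : L.idxOf a + 1 < L.idxOf b := by
    have hnadj := mt (adjacentIn_iff hL).2 h
    grind
  have hlen : L.idxOf a + 1 < L.length := hgap.trans (idxOf_lt_length_iff.2 hb)
  have hw : L.idxOf L[L.idxOf a + 1] = L.idxOf a + 1 := hL.idxOf_getElem _ hlen
  refine ⟨L[L.idxOf a + 1], ?_, ?_, Or.inl ⟨?_, ?_⟩⟩ <;> grind

theorem before_iff_not_before_of_adjacentIn {x u v : I} {L : List I} (hL : L.Nodup)
    (hu : AdjacentIn x u L) (hv : AdjacentIn x v L) (huv : u ≠ v) :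
    Before x u L ↔ ¬ Before x v L := by
  obtain ⟨-, huL, hu⟩ := (adjacentIn_iff hL).1 hu
  obtain ⟨-, -, hv⟩ := (adjacentIn_iff hL).1 hv
  have : L.idxOf u ≠ L.idxOf v := fun e => huv ((idxOf_inj huL).1 e)
  omega

def Reorders (S : List I → List I) (a b : I) (σ σ' : List I) : Prop :=
  ¬ (Before a b (S σ) ↔ Before a b (S σ'))

theorem Reorders.symm {S : List I → List I} {a b : I} {σ σ' : List I}
    (h : Reorders S a b σ σ') : Reorders S a b σ' σ :=
  fun h' => h h'.symm

theorem Reorders.ne {S : List I → List I} {a b : I} {σ σ' : List I}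
    (h : Reorders S a b σ σ') : a ≠ b := by
  rintro rfl
  exact h (by simp)

theorem before_congr_of_proj2_eq {S : List I → List I} (hproj : Projective S) {a b : I}
    {σ σ' : List I} (h : proj2 a b σ = proj2 a b σ') :
    Before a b (S σ) ↔ Before a b (S σ') := by
  rw [hproj, h, ← hproj]

theorem Reorders.of_proj2_eq {S : List I → List I} (hproj : Projective S) {a b : I}
    {σ σ' τ τ' : List I} (h : Reorders S a b τ τ') (hσ : proj2 a b σ = proj2 a b τ)
    (hσ' : proj2 a b σ' = proj2 a b τ') : Reorders S a b σ σ' := fun h' =>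
  h ((before_congr_of_proj2_eq hproj hσ).symm.trans
    (h'.trans (before_congr_of_proj2_eq hproj hσ')))

theorem before_append_cons_cons_comm {S : List I → List I} (hproj : Projective S)
    {a b c d e : I} (A B : List I) (he : e = c ∨ e = d) (hea : e ≠ a) (heb : e ≠ b) :
    Before a b (S (A ++ c :: d :: B)) ↔ Before a b (S (A ++ d :: c :: B)) :=
  before_congr_of_proj2_eq hproj (proj2_append_cons_cons_comm A B he hea heb)

theorem Reorders.mem {S : List I → List I} {L0 : List I} (hperm : ∀ σ, (S σ).Perm L0)
    {a b : I} {σ σ' : List I} (h : Reorders S a b σ σ') : a ∈ S σ ∧ b ∈ S σ := by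
  have key : ∀ τ τ', Before a b (S τ) → ¬ Before a b (S τ') → a ∈ L0 ∧ b ∈ L0 := by
    intro τ τ' hτ hτ'
    have ha := (hperm τ).mem_iff.1 (mem_of_before hτ)
    exact ⟨ha, (hperm τ').mem_iff.1 (mem_of_not_before ((hperm τ').mem_iff.2 ha) hτ')⟩
  rw [(hperm σ).mem_iff, (hperm σ).mem_iff]
  by_cases hσ : Before a b (S σ)
  · exact key σ σ' hσ fun hσ' => h (iff_of_true hσ hσ')
  · exact key σ' σ (by_contra fun hσ' => h (iff_of_false hσ hσ')) hσ

theorem adjacentIn_of_reorders {S : List I → List I} {L0 : List I}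
    (hperm : ∀ σ, (S σ).Perm L0) (hnodup : L0.Nodup) (hproj : Projective S)
    {a b c d : I} {A B : List I} (ha : a = c ∨ a = d) (hb : b = c ∨ b = d)
    (h : Reorders S a b (A ++ c :: d :: B) (A ++ d :: c :: B)) :
    AdjacentIn a b (S (A ++ c :: d :: B)) := by
  by_contra hadj
  have hab := h.ne
  obtain ⟨haL, hbL⟩ := h.mem hperm
  obtain ⟨w, hwa, hwb, hw⟩ :=
    exists_between_of_not_adjacentIn ((hperm _).nodup_iff.2 hnodup) haL hbL hab hadj
  have hba := hab.symm
  have hwa' := hwa.symm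
  have hwb' := hwb.symm
  rcases hw with ⟨haw, hwb⟩ | ⟨hbw, hwa⟩
  · refine h (iff_of_true (haw.trans hwb) ?_)
    exact ((before_append_cons_cons_comm hproj A B hb hba hwb').1 haw).trans
      ((before_append_cons_cons_comm hproj A B ha hwa' hab).1 hwb)
  · refine h (iff_of_false (lt_asymm (hbw.trans hwa)) (lt_asymm ?_))
    exact ((before_append_cons_cons_comm hproj A B ha hab hwa').1 hbw).trans
      ((before_append_cons_cons_comm hproj A B hb hwb' hba).1 hwa)

theorem not_reorders_of_later_reorders {S : List I → List I} {L0 : List I}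
    (hperm : ∀ σ, (S σ).Perm L0) (hnodup : L0.Nodup) (hproj : Projective S)
    {x u v : I} (hu : u ≠ x) (huv : u ≠ v) (A B C : List I)
    (hv₁ : Reorders S x v (A ++ x :: u :: B ++ x :: v :: C) (A ++ x :: u :: B ++ v :: x :: C))
    (hv₂ : Reorders S x v (A ++ u :: x :: B ++ x :: v :: C) (A ++ u :: x :: B ++ v :: x :: C)) :
    ¬ Reorders S x u (A ++ x :: u :: B ++ x :: v :: C) (A ++ u :: x :: B ++ x :: v :: C) := by
  intro hu₁
  set σ₁ := A ++ x :: u :: B ++ x :: v :: C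
  set σ₂ := A ++ u :: x :: B ++ x :: v :: C
  have hxv : Before x v (S σ₁) ↔ Before x v (S σ₂) := by
    simpa [σ₁, σ₂] using before_append_cons_cons_comm hproj A (B ++ x :: v :: C)
      (Or.inr rfl) hu huv
  have hxu₁ : AdjacentIn x u (S σ₁) := by
    simpa [σ₁] using adjacentIn_of_reorders hperm hnodup hproj (A := A)
      (B := B ++ x :: v :: C) (Or.inl rfl) (Or.inr rfl) (by simpa [σ₁, σ₂] using hu₁)
  have hxu₂ : AdjacentIn x u (S σ₂) := by
    simpa [σ₂] using adjacentIn_of_reorders hperm hnodup hproj (A := A)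
      (B := B ++ x :: v :: C) (Or.inr rfl) (Or.inl rfl) (by simpa [σ₁, σ₂] using hu₁.symm)
  have hxv₁ : AdjacentIn x v (S σ₁) :=
    adjacentIn_of_reorders hperm hnodup hproj (Or.inl rfl) (Or.inr rfl) hv₁
  have hxv₂ : AdjacentIn x v (S σ₂) :=
    adjacentIn_of_reorders hperm hnodup hproj (Or.inl rfl) (Or.inr rfl) hv₂
  have hL := fun σ => (hperm σ).nodup_iff.2 hnodup
  -- `u` and `v` sit on opposite sides of `x` in both list states, but only `u` changes side.
  exact hu₁ <| (before_iff_not_before_of_adjacentIn (hL _) hxu₁ hxv₁ huv).trans <|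
    (not_congr hxv).trans (before_iff_not_before_of_adjacentIn (hL _) hxu₂ hxv₂ huv).symm

theorem not_count_lt_of_reorders {S : List I → List I} {L0 : List I}
    (hperm : ∀ σ, (S σ).Perm L0) (hnodup : L0.Nodup) (hproj : Projective S)
    {x u v : I} (hu : u ≠ x) (hv : v ≠ x) (huv : u ≠ v) {α β γ δ : List I}
    (hα : Reorders S x u (α ++ x :: u :: β) (α ++ u :: x :: β))
    (hγ : Reorders S x v (γ ++ x :: v :: δ) (γ ++ v :: x :: δ))
    (hc : (α ++ x :: u :: β).count x = (γ ++ x :: v :: δ).count x) :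
    ¬ α.count x < γ.count x := by
  intro hlt
  obtain ⟨γ₁, γ₂, rfl, hγ₁⟩ := exists_eq_append_cons_of_lt_count hlt
  simp only [count_append, count_cons_self, count_cons_of_ne hu, count_cons_of_ne hv] at hc
  obtain ⟨β₁, β₂, rfl, hβ₁⟩ := exists_eq_append_cons_of_lt_count (a := x) (l := β)
    (n := γ₂.count x) (by omega)
  simp only [count_append, count_cons_self] at hc
  -- Interleave the two sequences so that both agile pairs occur in `W₁ x u W₂ x v W₃`.
  obtain ⟨W₁, hW₁u, hW₁v⟩ := exists_proj2_eq_proj2 hu huv (s := α) (t := γ₁) hγ₁.symm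
  obtain ⟨W₂, hW₂u, hW₂v⟩ := exists_proj2_eq_proj2 hu huv (s := β₁) (t := γ₂) hβ₁
  obtain ⟨W₃, hW₃u, hW₃v⟩ := exists_proj2_eq_proj2 hu huv (s := β₂) (t := δ) (by omega)
  refine not_reorders_of_later_reorders hperm hnodup hproj hu huv W₁ W₂ W₃
    (hγ.of_proj2_eq hproj ?_ ?_) (hγ.of_proj2_eq hproj ?_ ?_) (hα.of_proj2_eq hproj ?_ ?_) <;>
  simp [proj2_append, proj2_cons, hW₁u, hW₂u, hW₃u, hW₁v, hW₂v, hW₃v, hu, hv, huv, huv.symm]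

theorem count_eq_of_reorders {S : List I → List I} {L0 : List I}
    (hperm : ∀ σ, (S σ).Perm L0) (hnodup : L0.Nodup) (hproj : Projective S)
    {x u v : I} (hu : u ≠ x) (hv : v ≠ x) (huv : u ≠ v) {α β γ δ : List I}
    (hα : Reorders S x u (α ++ x :: u :: β) (α ++ u :: x :: β))
    (hγ : Reorders S x v (γ ++ x :: v :: δ) (γ ++ v :: x :: δ))
    (hc : (α ++ x :: u :: β).count x = (γ ++ x :: v :: δ).count x) :
    α.count x = γ.count x :=
  le_antisymm
    (not_lt.1 (not_count_lt_of_reorders hperm hnodup hproj hv hu huv.symm hγ hα hc.symm))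
    (not_lt.1 (not_count_lt_of_reorders hperm hnodup hproj hu hv huv hα hγ hc))

theorem inR_iff {S : List I → List I} {x : I} {i q : ℕ} :
    InR S x i q ↔ ∃ u α β, u ≠ x ∧ (α ++ x :: u :: β).count x = i ∧
      α.count x + 1 = q ∧ Reorders S x u (α ++ x :: u :: β) (α ++ u :: x :: β) := by
  constructor
  · rintro ⟨σ, u, p, rfl, hux, ⟨⟨hc, hd⟩ | ⟨hc, hd⟩, hσ⟩, hq⟩
    · obtain ⟨A, B, rfl, rfl⟩ := exists_eq_append_cons_cons hc hd
      rw [swapAt_append_cons_cons] at hσ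
      refine ⟨u, A, B, hux, rfl, ?_, hσ⟩
      simp_all [take_length_add_append]
    · obtain ⟨A, B, rfl, rfl⟩ := exists_eq_append_cons_cons hc hd
      rw [swapAt_append_cons_cons] at hσ
      refine ⟨u, A, B, hux, by simp [hux], ?_, fun h => hσ h.symm⟩
      simp_all [take_length_add_append]
  · rintro ⟨u, α, β, hux, rfl, rfl, h⟩
    refine ⟨α ++ x :: u :: β, u, α.length, rfl, hux, ⟨Or.inl (by simp), ?_⟩,
      Or.inl ⟨by simp, by simp [take_length_add_append]⟩⟩
    rwa [swapAt_append_cons_cons]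

theorem InPerm.perm {x y : I} {i j : ℕ} {τ τ' : List I} (hτ : InPerm x y i j τ)
    (hτ' : InPerm x y i j τ') : τ.Perm τ' := by
  rw [perm_iff_count]
  intro a
  by_cases hax : a = x
  · rw [hax, hτ.1, hτ'.1]
  by_cases hay : a = y
  · rw [hay, hτ.2.1, hτ'.2.1]
  rw [count_eq_zero.2 fun h => by grind [hτ.2.2 a h],
    count_eq_zero.2 fun h => by grind [hτ'.2.2 a h]]

theorem Agile.exists_reorders {S : List I → List I} {x y : I} {i j : ℕ}
    (h : Agile S x i y j) :
    ∃ α β, (α ++ x :: y :: β).count x = i ∧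
      Reorders S x y (α ++ x :: y :: β) (α ++ y :: x :: β) := by
  obtain ⟨τ, τ', hτ, hτ', hxy, hyx⟩ := h
  obtain ⟨A, c, d, B, hp, hAB⟩ :=
    (hτ.perm hτ').exists_swap_not_iff (fun σ => Before x y (S σ)) fun h => lt_asymm (h.1 hxy) hyx
  have hc : c = x ∨ c = y := hτ.2.2 c (hp.subset (by simp))
  have hd : d = x ∨ d = y := hτ.2.2 d (hp.subset (by simp))
  have hcount : (A ++ c :: d :: B).count x = i := hp.count_eq x ▸ hτ.1
  rcases hc with rfl | rfl <;> rcases hd with rfl | rfl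
  · exact absurd Iff.rfl hAB
  · exact ⟨A, B, hcount, hAB⟩
  · exact ⟨A, B, ((Perm.swap _ _ B).append_left A).count_eq _ ▸ hcount,
    fun h => hAB h.symm⟩
  · exact absurd Iff.rfl hAB

end

/-- If both pairs `x^i, y^j` and `x^i, z^k` are agile (with `y ≠ z`),
then there is exactly one index `q` with `1 ≤ q ≤ i` such that the `q`-th request to
`x` participates in an agile pair, i.e. `|R(x^i)| = 1`. -/
theorem R_unique
    {I : Type} [DecidableEq I] (S : List I → List I) (L0 : List I)
    (hperm : ∀ σ, (S σ).Perm L0) (hnodup : L0.Nodup)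
    (hproj : Projective S)
    (x y z : I) (hxy : x ≠ y) (hxz : x ≠ z) (hyz : y ≠ z)
    (i j k : ℕ)
    (hA1 : Agile S x i y j) (hA2 : Agile S x i z k) :
    ∃! q : ℕ, 1 ≤ q ∧ q ≤ i ∧ InR S x i q := by
  obtain ⟨α, β, hαβ, hy⟩ := hA1.exists_reorders
  obtain ⟨γ, δ, hγδ, hz⟩ := hA2.exists_reorders
  have hαγ : α.count x = γ.count x := count_eq_of_reorders hperm hnodup hproj
    hxy.symm hxz.symm hyz hy hz (hαβ.trans hγδ.symm)
  have hR : ∀ q, InR S x i q → q = α.count x + 1 := by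
    intro q hq
    obtain ⟨u, α', β', hux, hα'β', rfl, hu⟩ := inR_iff.1 hq
    by_cases huy : u = y
    · subst huy
      rw [hαγ, count_eq_of_reorders hperm hnodup hproj hux hxz.symm hyz hu hz
        (hα'β'.trans hγδ.symm)]
    · rw [count_eq_of_reorders hperm hnodup hproj hux hxy.symm huy hu hy
        (hα'β'.trans hαβ.symm)]
  refine ⟨α.count x + 1, ⟨le_add_self, ?_, inR_iff.2 ⟨y, α, β, hxy.symm, hαβ, rfl, hy⟩⟩,
    fun q hq => hR q hq.2.2⟩
  rw [count_append, count_cons_self, count_cons_of_ne hxy.symm] at hαβ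
  omega
end
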